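/- Under the FIFO property of edge travel times, the earliest-arrival-time routing problem with state (node, arrival time) reduces to a problem with state only the node: defining J̃(v) as the earliest arrival time at node v computed by the forward recursion J̃(y) = min over x with (x,y)∈E of [J̃(x) + g((x,y), J̃(x))] (on an acyclic layered graph with N stages), the value J̃(destination) equals the minimum arrival time at the destination over all paths from the origin with initial time t_0. -/
import Mathlib


/-- Arrival time along a path `x` starting at time `t0`, with time-dependent edge
travel times `g`. -/
noncomputable def arrival {V : Type*} (g : V × V → ℝ → ℝ) (x : ℕ → V) (t0 : ℝ) : ℕ → ℝ
  | 0 => t0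
  | l + 1 => arrival g x t0 l + g (x l, x (l + 1)) (arrival g x t0 l)

/-- One forward-DP step on extended reals: from arrival value `s` at the tail of edge
`e`, the arrival value `s + g(e, s)` at its head (`⊤` if `s` is not a real number). -/
noncomputable def stepTime {V : Type*} (g : V × V → ℝ → ℝ) (e : V × V) (s : EReal) : EReal :=
  if s = ⊤ ∨ s = ⊥ then ⊤ else ((s.toReal + g e s.toReal : ℝ) : EReal)

lemma stepTime_coe {V : Type*} (g : V × V → ℝ → ℝ) (e : V × V) (r : ℝ) :
    stepTime g e (r : EReal) = ((r + g e r : ℝ) : EReal) := by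
  simp [stepTime]

lemma arrival_congr {V : Type*} (g : V × V → ℝ → ℝ) (x z : ℕ → V) (t0 : ℝ) (l : ℕ)
    (h : ∀ m ≤ l, x m = z m) : arrival g x t0 l = arrival g z t0 l := by
  induction l with
  | zero => rfl
  | succ n ih =>
    have h1 : ∀ m ≤ n, x m = z m := fun m hm => h m (Nat.le_succ_of_le hm)
    show arrival g x t0 n + g (x n, x (n+1)) (arrival g x t0 n) = _
    rw [ih h1, h n (Nat.le_succ n), h (n+1) le_rfl]
    rfl

lemma sInf_iUnion' {ι : Sort*} (s : ι → Set EReal) : sInf (⋃ i, s i) = ⨅ i, sInf (s i) := by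
  rw [sInf_eq_iInf, iInf_iUnion]
  simp_rw [sInf_eq_iInf]

/-- Under FIFO, the forward DP with state reduced to the node only computes, at the
destination after `N` stages, the minimum arrival time at the destination over all
paths of length `N` from the origin started at time `t0`. -/
theorem node_state_forward_dp_earliest_arrival
    {V : Type*} [Fintype V] [DecidableEq V] (E : V → V → Prop) (g : V × V → ℝ → ℝ)
    (hgpos : ∀ (e : V × V) (t : ℝ), 0 < g e t)
    (hFIFO : ∀ (e : V × V) (t t' : ℝ), t < t' → t + g e t < t' + g e t')
    (ni nf : V) (t0 : ℝ) (N : ℕ) (J : ℕ → V → EReal)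
    (hJ0 : ∀ v : V, J 0 v = if v = ni then (t0 : EReal) else ⊤)
    (hJ : ∀ (l : ℕ) (y : V), J (l + 1) y =
      ⨅ x : {x : V // E (x : V) y}, stepTime g ((x : V), y) (J l (x : V))) :
    J N nf = sInf {s : EReal | ∃ x : ℕ → V, x 0 = ni ∧ x N = nf ∧
      (∀ m < N, E (x m) (x (m + 1))) ∧ s = ((arrival g x t0 N : ℝ) : EReal)} := by
  set A : ℕ → V → Set EReal := fun l v =>
    {s : EReal | ∃ x : ℕ → V, x 0 = ni ∧ x l = v ∧
      (∀ m < l, E (x m) (x (m + 1))) ∧ s = ((arrival g x t0 l : ℝ) : EReal)} with hAdef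
  -- step monotonicity from FIFO
  have step_mono : ∀ (e : V × V) {r r' : ℝ}, r ≤ r' →
      stepTime g e (r : EReal) ≤ stepTime g e (r' : EReal) := by
    intro e r r' h
    rw [stepTime_coe, stepTime_coe, EReal.coe_le_coe_iff]
    rcases h.lt_or_eq with hlt | heq
    · exact (hFIFO e r r' hlt).le
    · rw [heq]
  -- finiteness of arrival sets
  have A_fin : ∀ l v, (A l v).Finite := by
    intro l v
    apply Set.Finite.subset (Set.finite_range (fun f : Fin (l + 1) → V =>
      ((arrival g (fun m => f ⟨min m l, Nat.lt_succ_of_le (min_le_right _ _)⟩) t0 l : ℝ) : EReal)))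
    rintro s ⟨x, -, -, -, rfl⟩
    refine ⟨fun i => x i, ?_⟩
    have : arrival g (fun m => x (min m l)) t0 l = arrival g x t0 l :=
      arrival_congr g _ x t0 l (fun m hm => by rw [min_eq_left hm])
    simp only [this]
  suffices h : ∀ l v, J l v = sInf (A l v) by exact h N nf
  intro l
  induction l with
  | zero =>
    intro v
    rw [hJ0]
    by_cases hv : v = ni
    · subst hv
      rw [if_pos rfl]
      have : A 0 v = {(t0 : EReal)} := by
        ext s
        simp only [hAdef, Set.mem_setOf_eq, Set.mem_singleton_iff]
        constructor
        · rintro ⟨x, hx0, -, -, rfl⟩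
          rfl
        · intro hs
          exact ⟨fun _ => v, rfl, rfl, fun m hm => absurd hm (Nat.not_lt_zero m), hs⟩
      rw [this, sInf_singleton]
    · rw [if_neg hv]
      have : A 0 v = ∅ := by
        ext s
        simp only [hAdef, Set.mem_setOf_eq, Set.mem_empty_iff_false, iff_false]
        rintro ⟨x, hx0, hxv, -, -⟩
        exact hv (hxv ▸ hx0 ▸ rfl)
      rw [this, sInf_empty]
  | succ l ih =>
    intro y
    -- key: step commutes with sInf on each predecessor set
    have key : ∀ w : V, stepTime g (w, y) (sInf (A l w)) = sInf (stepTime g (w, y) '' A l w) := by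
      intro w
      rcases (A l w).eq_empty_or_nonempty with he | hne
      · simp [he, stepTime, sInf_empty]
      · have hmem := hne.csInf_mem (A_fin l w)
        obtain ⟨x', -, -, -, hx'⟩ := hmem
        apply le_antisymm
        · apply le_sInf
          rintro _ ⟨s, hs, rfl⟩
          obtain ⟨x, hx0, hxl, hE, rfl⟩ := hs
          rw [hx']
          apply step_mono
          have hle : sInf (A l w) ≤ ((arrival g x t0 l : ℝ) : EReal) :=
            sInf_le ⟨x, hx0, hxl, hE, rfl⟩
          rw [hx'] at hle
          exact_mod_cast hle
        · have : sInf (A l w) ∈ A l w := hne.csInf_mem (A_fin l w)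
          exact sInf_le ⟨_, this, rfl⟩
    -- the set of arrivals at stage l+1 is the union over predecessors
    have hset : A (l + 1) y = ⋃ x : {x : V // E (x : V) y}, stepTime g ((x : V), y) '' A l (x : V) := by
      ext s
      simp only [hAdef, Set.mem_setOf_eq, Set.mem_iUnion, Set.mem_image, Subtype.exists]
      constructor
      · rintro ⟨x, hx0, hxl, hE, rfl⟩
        have hEl : E (x l) y := by have := hE l (Nat.lt_succ_self l); rwa [hxl] at this
        refine ⟨x l, hEl, ((arrival g x t0 l : ℝ) : EReal),
          ⟨x, hx0, rfl, fun m hm => hE m (Nat.lt_succ_of_lt hm), rfl⟩, ?_⟩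
        rw [stepTime_coe]
        have : arrival g x t0 (l + 1)
            = arrival g x t0 l + g (x l, x (l + 1)) (arrival g x t0 l) := rfl
        rw [this, hxl]
      · rintro ⟨w, hw, _, ⟨z, hz0, hzl, hE, rfl⟩, rfl⟩
        refine ⟨fun m => if m ≤ l then z m else y, by simp [hz0], by simp, ?_, ?_⟩
        · intro m hm
          rcases Nat.lt_or_ge m l with h1 | h1
          · simpa [Nat.le_of_lt h1, Nat.succ_le_of_lt h1] using hE m h1
          · have hml : m = l := by omega
            subst hml
            simpa [hzl] using hw
        · have hcong : arrival g (fun m => if m ≤ l then z m else y) t0 l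
              = arrival g z t0 l :=
            arrival_congr g _ z t0 l (fun m hm => by simp [hm])
          rw [stepTime_coe]
          have : arrival g (fun m => if m ≤ l then z m else y) t0 (l + 1)
              = arrival g (fun m => if m ≤ l then z m else y) t0 l
                + g ((if l ≤ l then z l else y), (if l + 1 ≤ l then z (l + 1) else y))
                  (arrival g (fun m => if m ≤ l then z m else y) t0 l) := rfl
          rw [this, hcong]
          simp [hzl]
    rw [hJ, hset, sInf_iUnion']
    congr 1
    funext x
    rw [ih, key]
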